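/- Let F_2 = ⟨x_1,x_2⟩ and F_{n−2} = ⟨x_3,…,x_n⟩ in F_n = F_2 * F_{n−2}. Suppose η̂ ∈ Aut(F_n) restricts to conjugation by a ∈ F_2 on F_2 and to conjugation by w ∈ F_n on F_{n−2}, where w has no nontrivial initial F_2-segment, and suppose the outer class of η̂ has an inverse represented by μ̂ with μ̂|F_2 = conjugation by a' ∈ F_2 and μ̂|F_{n−2} = conjugation by v ∈ F_n beginning in F_{n−2}, with μ̂(w)·v ∈ F_2. Then w ∈ F_{n−2}, and hence η̂ = i_a × i_w ∈ Aut(F_2) × Aut(F_{n−2}). -/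

import Mathlib

/-!
Color the generators `x₁, x₂` `true` and `x₃, …, xₙ` `false`, and look at the colors of the
first and last letters of reduced words: two reduced words whose adjacent end letters have
different colors multiply by concatenation. Write `v = v₀ d` with `d ∈ F_{n-2}` the maximal final
`F_{n-2}`-segment of `v`, so `v₀` begins in `F_{n-2}` and ends in `F_2`. Then `θ = i_{v₀}⁻¹ ∘ μ̂`
maps an `F_{n-2}`-syllable `u` to `d u d⁻¹` and an `F_2`-syllable `z` to `v₀⁻¹ μ̂(z) v₀`, both with
the same end colors as the syllable, so by induction over syllables `θ` preserves the end colors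
of every element. If `w ∉ F_{n-2}`, then `w d` begins in `F_{n-2}`, hence so does `θ(w d)`, and
`μ̂(w) v = v₀ θ(w d)` is a reduced concatenation beginning with a letter of `F_{n-2}`.
-/

/-- The subgroup `F_2 = ⟨x_1, x_2⟩` of `F_n`. -/
def F2sub (n : ℕ) : Subgroup (FreeGroup (Fin n)) :=
  Subgroup.closure (FreeGroup.of '' {i : Fin n | (i : ℕ) < 2})

/-- The subgroup `F_{n-2} = ⟨x_3, …, x_n⟩` of `F_n`. -/
def Fm2sub (n : ℕ) : Subgroup (FreeGroup (Fin n)) :=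
  Subgroup.closure (FreeGroup.of '' {i : Fin n | 2 ≤ (i : ℕ)})

/-- `w` has no nontrivial initial segment in the subgroup `A`: there is no
reduced factorization `w = a·w'` (lengths adding) with `1 ≠ a ∈ A`. -/
def NoInitialSegment {n : ℕ} (A : Subgroup (FreeGroup (Fin n)))
    (w : FreeGroup (Fin n)) : Prop :=
  ∀ a ∈ A, a ≠ 1 → ∀ w' : FreeGroup (Fin n), w = a * w' →
    (FreeGroup.toWord w).length ≠
      (FreeGroup.toWord a).length + (FreeGroup.toWord w').length

theorem Option.or_some_of_ne_some_not {o : Option Bool} {b : Bool} (h : o ≠ some !b) :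
    o.or (some b) = some b := by
  rcases o with _ | c
  · rfl
  · cases b <;> cases c <;> simp_all

namespace FreeGroup

variable {α : Type*} [DecidableEq α]

theorem mem_closure_image_of_iff {s : Set α} {x : FreeGroup α} :
    x ∈ Subgroup.closure (of '' s) ↔ ∀ l ∈ x.toWord, l.1 ∈ s := by
  constructor
  · intro hx
    induction hx using Subgroup.closure_induction with
    | mem _ h => obtain ⟨i, hi, rfl⟩ := h; simpa [toWord_of] using hi
    | one => simp [toWord_one]
    | mul x y _ _ hx hy =>
      intro l hl
      rcases List.mem_append.1 ((toWord_mul_sublist x y).subset hl) with h | h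
      exacts [hx l h, hy l h]
    | inv x _ hx =>
      intro l hl
      obtain ⟨l', hl', rfl⟩ := List.mem_map.1 (List.mem_reverse.1 (toWord_inv x ▸ hl))
      exact hx l' hl'
  · suffices ∀ L : List (α × Bool), (∀ l ∈ L, l.1 ∈ s) → mk L ∈ Subgroup.closure (of '' s) from
      fun hx => mk_toWord (x := x) ▸ this _ hx
    intro L hL
    induction L with
    | nil => exact Subgroup.one_mem _
    | cons l L ih =>
      simp only [List.mem_cons, forall_eq_or_imp] at hL
      rw [← List.singleton_append, ← mul_mk]
      refine Subgroup.mul_mem _ ?_ (ih hL.2)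
      obtain ⟨i, _ | _⟩ := l
      · have hi : of i ∈ Subgroup.closure (of '' s) := Subgroup.subset_closure ⟨i, hL.1, rfl⟩
        convert Subgroup.inv_mem _ hi using 1
        rw [of, inv_mk]
        rfl
      · exact Subgroup.subset_closure ⟨i, hL.1, rfl⟩

theorem eq_mul_of_toWord_eq_append {x y z : FreeGroup α} (h : z.toWord = x.toWord ++ y.toWord) :
    z = x * y := by
  rw [← mk_toWord (x := z), h, ← mul_mk, mk_toWord, mk_toWord]

section Color

variable (p : α → Bool)

def colorSubgroup (b : Bool) : Subgroup (FreeGroup α) :=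
  Subgroup.closure (of '' {i | p i = b})

def headColor (x : FreeGroup α) : Option Bool := x.toWord.head?.map (p ·.1)

def lastColor (x : FreeGroup α) : Option Bool := x.toWord.getLast?.map (p ·.1)

def endColors (x : FreeGroup α) : Option Bool × Option Bool := (headColor p x, lastColor p x)

variable {p}

theorem mem_colorSubgroup {b : Bool} {x : FreeGroup α} :
    x ∈ colorSubgroup p b ↔ ∀ l ∈ x.toWord, p l.1 = b :=
  mem_closure_image_of_iff

@[simp]
theorem endColors_one : endColors p 1 = (none, none) := by
  simp [endColors, headColor, lastColor, toWord_one]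

theorem headColor_inv (x : FreeGroup α) : headColor p x⁻¹ = lastColor p x := by
  simp [headColor, lastColor, toWord_inv, invRev, List.head?_reverse, Option.map_map,
    Function.comp_def]

theorem lastColor_inv (x : FreeGroup α) : lastColor p x⁻¹ = headColor p x := by
  simpa using (headColor_inv (p := p) x⁻¹).symm

theorem endColors_of_toWord_eq_append {x y z : FreeGroup α}
    (h : z.toWord = x.toWord ++ y.toWord) :
    endColors p z = ((headColor p x).or (headColor p y), (lastColor p y).or (lastColor p x)) := by
  simp [endColors, headColor, lastColor, h, List.head?_append, List.getLast?_append, Option.map_or]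

theorem headColor_ne_none {x : FreeGroup α} (hx : x ≠ 1) : headColor p x ≠ none := by
  rwa [headColor, Ne, Option.map_eq_none_iff, List.head?_eq_none_iff, toWord_eq_nil_iff]

theorem lastColor_ne_none {x : FreeGroup α} (hx : x ≠ 1) : lastColor p x ≠ none := by
  rw [← headColor_inv]
  exact headColor_ne_none (inv_ne_one.2 hx)

theorem toWord_mul_of_lastColor_ne {x y : FreeGroup α} (h : lastColor p x ≠ headColor p y) :
    (x * y).toWord = x.toWord ++ y.toWord := by
  rw [toWord_mul, IsReduced.reduce_eq]
  refine isReduced_toWord.append isReduced_toWord fun a ha b hb hab => absurd ?_ h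
  rw [lastColor, headColor, Option.mem_def.1 ha, Option.mem_def.1 hb]
  simp [hab]

theorem endColors_mul {x y : FreeGroup α} (h : lastColor p x ≠ headColor p y) :
    endColors p (x * y) =
      ((headColor p x).or (headColor p y), (lastColor p y).or (lastColor p x)) :=
  endColors_of_toWord_eq_append (toWord_mul_of_lastColor_ne h)

theorem endColors_of_mem_colorSubgroup {b : Bool} {x : FreeGroup α} (hx : x ∈ colorSubgroup p b)
    (h1 : x ≠ 1) : endColors p x = (some b, some b) := by
  have hne : x.toWord ≠ [] := mt toWord_eq_nil_iff.1 h1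
  rw [mem_colorSubgroup] at hx
  simp only [endColors, headColor, lastColor, List.head?_eq_some_head hne,
    List.getLast?_eq_some_getLast hne, Option.map_some, hx _ (List.head_mem hne),
    hx _ (List.getLast_mem hne)]

theorem headColor_ne_of_mem_colorSubgroup {b : Bool} {x : FreeGroup α}
    (hx : x ∈ colorSubgroup p b) : headColor p x ≠ some !b := by
  rcases eq_or_ne x 1 with rfl | h1
  · simp [headColor, toWord_one]
  · rw [show headColor p x = some b from congrArg Prod.fst (endColors_of_mem_colorSubgroup hx h1)]
    simp

theorem exists_toWord_eq_mem_colorSubgroup_append (x : FreeGroup α) (b : Bool) :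
    ∃ u y, u ∈ colorSubgroup p b ∧ headColor p y ≠ some b ∧ x.toWord = u.toWord ++ y.toWord := by
  set q : α × Bool → Bool := fun l => p l.1 == b
  have hu : (mk (x.toWord.takeWhile q)).toWord = x.toWord.takeWhile q :=
    toWord_mk.trans (isReduced_toWord.infix (List.takeWhile_prefix q).isInfix).reduce_eq
  have hy : (mk (x.toWord.dropWhile q)).toWord = x.toWord.dropWhile q :=
    toWord_mk.trans (isReduced_toWord.infix (List.dropWhile_suffix q).isInfix).reduce_eq
  refine ⟨mk (x.toWord.takeWhile q), mk (x.toWord.dropWhile q), ?_, ?_,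
    by rw [hu, hy, List.takeWhile_append_dropWhile]⟩
  · rw [mem_colorSubgroup, hu]
    intro l hl
    simpa [q] using List.mem_takeWhile_imp hl
  · have := List.head?_dropWhile_not q x.toWord
    rw [headColor, hy]
    split at this
    next l hl => simpa [hl, q] using this
    next hl => simp [hl]

theorem exists_toWord_eq_append_mem_colorSubgroup (x : FreeGroup α) (b : Bool) :
    ∃ y u, u ∈ colorSubgroup p b ∧ lastColor p y ≠ some b ∧ x.toWord = y.toWord ++ u.toWord := by
  obtain ⟨u, y, hu, hy, h⟩ := exists_toWord_eq_mem_colorSubgroup_append (p := p) x⁻¹ b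
  refine ⟨y⁻¹, u⁻¹, inv_mem hu, by rwa [lastColor_inv], ?_⟩
  rw [toWord_inv, toWord_inv, ← invRev_append, ← h, ← toWord_inv, inv_inv]

theorem endColors_map_eq (θ : FreeGroup α →* FreeGroup α)
    (hθ : ∀ b, ∀ x ∈ colorSubgroup p b, endColors p (θ x) = endColors p x) (x : FreeGroup α) :
    endColors p (θ x) = endColors p x := by
  induction hn : x.toWord.length using Nat.strong_induction_on generalizing x with
  | _ n ih =>
  rcases eq_or_ne x 1 with rfl | hx1
  · simp
  obtain ⟨c, hc⟩ := Option.ne_none_iff_exists'.1 (headColor_ne_none (p := p) hx1)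
  obtain ⟨u, y, hu, hy, hxuy⟩ := exists_toWord_eq_mem_colorSubgroup_append (p := p) x c
  rw [eq_mul_of_toWord_eq_append hxuy]
  rcases eq_or_ne y 1 with rfl | hy1
  · simpa using hθ c u hu
  have hu1 : u ≠ 1 := by
    rintro rfl
    simp only [toWord_one, List.nil_append] at hxuy
    exact hy (by rwa [headColor, ← hxuy])
  have huy : lastColor p u ≠ headColor p y := by
    rw [show lastColor p u = some c from congrArg Prod.snd (endColors_of_mem_colorSubgroup hu hu1)]
    exact hy.symm
  have hlen := congrArg List.length hxuy
  rw [List.length_append, hn] at hlen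
  have hu_pos := List.length_pos_iff.2 (mt toWord_eq_nil_iff.1 hu1)
  have hy_pos := List.length_pos_iff.2 (mt toWord_eq_nil_iff.1 hy1)
  have ihu := ih _ (by omega) u rfl
  have ihy := ih _ (by omega) y rfl
  simp only [endColors, Prod.mk.injEq] at ihu ihy
  have hθuy : lastColor p (θ u) ≠ headColor p (θ y) := by rwa [ihu.2, ihy.1]
  rw [_root_.map_mul, endColors_mul hθuy, endColors_mul huy, ihu.1, ihu.2, ihy.1, ihy.2]

theorem endColors_inv_mul_mul_of_mem_colorSubgroup {b : Bool} {q g : FreeGroup α}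
    (hq : q ∈ colorSubgroup p b) (hq1 : q ≠ 1) (hg : headColor p g ≠ some b)
    (hg' : lastColor p g ≠ some !b) :
    endColors p (g⁻¹ * q * g) = (some b, some b) := by
  have hq' := endColors_of_mem_colorSubgroup hq hq1
  simp only [endColors, Prod.mk.injEq] at hq'
  have hqg := endColors_mul (p := p) (x := q) (y := g) (by rw [hq'.2]; exact hg.symm)
  rw [hq'.1, hq'.2, Option.some_or, Option.or_some_of_ne_some_not hg'] at hqg
  simp only [endColors, Prod.mk.injEq] at hqg
  rw [mul_assoc, endColors_mul (by rw [lastColor_inv, hqg.1]; exact hg), headColor_inv, hqg.1,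
    hqg.2, Option.or_some_of_ne_some_not hg', Option.some_or]

theorem headColor_mul_of_not_mem_colorSubgroup {b : Bool} {w d : FreeGroup α}
    (hw : headColor p w ≠ some !b) (hwb : w ∉ colorSubgroup p b) (hd : d ∈ colorSubgroup p b) :
    headColor p (w * d) = some b := by
  obtain ⟨w₁, u, hu, hw₁, hw₁u⟩ := exists_toWord_eq_append_mem_colorSubgroup (p := p) w b
  have hw₁1 : w₁ ≠ 1 := by
    rintro rfl
    exact hwb (by simpa [eq_mul_of_toWord_eq_append hw₁u] using hu)
  obtain ⟨c, hc⟩ := Option.ne_none_iff_exists'.1 (headColor_ne_none (p := p) hw₁1)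
  have hud : headColor p (u * d) ≠ some !b := headColor_ne_of_mem_colorSubgroup (mul_mem hu hd)
  have hw₁ud : lastColor p w₁ ≠ headColor p (u * d) := by
    have := lastColor_ne_none (p := p) hw₁1
    generalize lastColor p w₁ = o₁ at *
    generalize headColor p (u * d) = o₂ at *
    rcases o₁ with _ | _ <;> rcases o₂ with _ | _ <;> cases b <;> simp_all
  have hww₁ := congrArg Prod.fst (endColors_of_toWord_eq_append (p := p) hw₁u)
  have hw₁ud' := congrArg Prod.fst (endColors_mul hw₁ud)
  simp only [endColors, hc, Option.some_or] at hww₁ hw₁ud'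
  rw [eq_mul_of_toWord_eq_append hw₁u, mul_assoc, hw₁ud']
  rw [hww₁] at hw
  cases b <;> cases c <;> simp_all

theorem endColors_conj_map_eq {μ : MulAut (FreeGroup α)} {v₀ d : FreeGroup α}
    (hμA : ∀ x ∈ colorSubgroup p true, μ x ∈ colorSubgroup p true)
    (hμB : ∀ x ∈ colorSubgroup p false, μ x = v₀ * d * x * (v₀ * d)⁻¹)
    (hd : d ∈ colorSubgroup p false) (hv₀ : headColor p v₀ ≠ some true)
    (hv₀' : lastColor p v₀ ≠ some false) (x : FreeGroup α) :
    endColors p (v₀⁻¹ * μ x * v₀) = endColors p x := by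
  let θ : FreeGroup α →* FreeGroup α := (MulAut.conj v₀⁻¹ * μ).toMonoidHom
  have hθ (y : FreeGroup α) : θ y = v₀⁻¹ * μ y * v₀ := by simp [θ]
  rw [← hθ]
  refine endColors_map_eq θ ?_ x
  rintro (_ | _) y hy <;> rcases eq_or_ne y 1 with rfl | hy1
  · simp
  · have hdyd : θ y = d * y * d⁻¹ := by rw [hθ, hμB y hy]; group
    have hdyd1 : θ y ≠ 1 := by rwa [hdyd, Ne, mul_inv_eq_one, mul_eq_left]
    rw [endColors_of_mem_colorSubgroup hy hy1, endColors_of_mem_colorSubgroup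
      (hdyd ▸ mul_mem (mul_mem hd hy) (inv_mem hd)) hdyd1]
  · simp
  · rw [hθ, endColors_of_mem_colorSubgroup hy hy1]
    exact endColors_inv_mul_mul_of_mem_colorSubgroup (hμA y hy)
      ((map_ne_one_iff μ μ.injective).2 hy1) hv₀ hv₀'

theorem mem_colorSubgroup_false_of_map_mul_mem {μ : MulAut (FreeGroup α)} {v w : FreeGroup α}
    (hμA : ∀ x ∈ colorSubgroup p true, μ x ∈ colorSubgroup p true)
    (hμB : ∀ x ∈ colorSubgroup p false, μ x = v * x * v⁻¹)
    (hv : headColor p v ≠ some true) (hw : headColor p w ≠ some true)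
    (hμwv : μ w * v ∈ colorSubgroup p true) : w ∈ colorSubgroup p false := by
  obtain ⟨v₀, d, hd, hv₀', hv₀d⟩ := exists_toWord_eq_append_mem_colorSubgroup (p := p) v false
  have hv₀ : headColor p v₀ ≠ some true := by
    have := congrArg Prod.fst (endColors_of_toWord_eq_append (p := p) hv₀d)
    intro h
    simp only [endColors, h, Option.some_or] at this
    exact hv this
  rw [eq_mul_of_toWord_eq_append hv₀d] at hμB hμwv
  by_contra hwB
  have hwd : headColor p (w * d) = some false := headColor_mul_of_not_mem_colorSubgroup hw hwB hd
  have hθwd := congrArg Prod.fst (endColors_conj_map_eq hμA hμB hd hv₀ hv₀' (w * d))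
  simp only [endColors, hwd] at hθwd
  have hμwv' : μ w * (v₀ * d) = v₀ * (v₀⁻¹ * μ (w * d) * v₀) := by
    rw [_root_.map_mul, hμB d hd]; group
  have := congrArg Prod.fst (endColors_mul (p := p) (hθwd ▸ hv₀'))
  simp only [endColors, hθwd, Option.or_some_of_ne_some_not (b := false) hv₀] at this
  exact headColor_ne_of_mem_colorSubgroup hμwv (by rw [hμwv', this]; rfl)

end Color

end FreeGroup

open FreeGroup

theorem headColor_ne_of_noInitialSegment {n : ℕ} {p : Fin n → Bool} {b : Bool}
    {w : FreeGroup (Fin n)} (h : NoInitialSegment (colorSubgroup p b) w) :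
    headColor p w ≠ some b := by
  obtain ⟨u, y, hu, hy, hw⟩ := exists_toWord_eq_mem_colorSubgroup_append (p := p) w b
  intro hwb
  have hu1 : u ≠ 1 := by
    rintro rfl
    rw [toWord_one, List.nil_append] at hw
    exact hy (by rwa [headColor, ← hw])
  exact h u hu hu1 y (eq_mul_of_toWord_eq_append hw) (by rw [hw, List.length_append])

theorem splitOut_normal_form_general (n : ℕ)
    (μ : MulAut (FreeGroup (Fin n)))
    (a' : FreeGroup (Fin n)) (ha' : a' ∈ F2sub n)
    (w v : FreeGroup (Fin n))
    (hwinit : NoInitialSegment (F2sub n) w)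
    (hvinit : NoInitialSegment (F2sub n) v)
    (hμF2 : ∀ x ∈ F2sub n, μ x = a' * x * a'⁻¹)
    (hμFm : ∀ x ∈ Fm2sub n, μ x = v * x * v⁻¹)
    (hkey : μ w * v ∈ F2sub n) :
    w ∈ Fm2sub n := by
  set p : Fin n → Bool := fun i => decide ((i : ℕ) < 2)
  have hF2 : F2sub n = colorSubgroup p true := by
    simp only [F2sub, colorSubgroup, p, decide_eq_true_eq]
  have hFm : Fm2sub n = colorSubgroup p false := by
    simp only [Fm2sub, colorSubgroup, p, decide_eq_false_iff_not, not_lt]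
  rw [hF2] at ha' hwinit hvinit hμF2 hkey
  rw [hFm] at hμFm ⊢
  refine mem_colorSubgroup_false_of_map_mul_mem (fun x hx => ?_) hμFm
    (headColor_ne_of_noInitialSegment hvinit) (headColor_ne_of_noInitialSegment hwinit) hkey
  rw [hμF2 x hx]
  exact mul_mem (mul_mem ha' hx) (inv_mem ha')

/-- Normal form argument in the proof that `splitOut ≅ Aut(F_2) × Aut(F_{n-2})`:
if `η̂` restricts to conjugation by `a ∈ F_2` on `F_2` and to conjugation by `w`
on `F_{n-2}` where `w` has no nontrivial initial `F_2`-segment, its outer class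
has an inverse represented by `μ̂` restricting to conjugation by `a' ∈ F_2` on
`F_2` and by `v` (beginning in `F_{n-2}`) on `F_{n-2}`, and `μ̂(w)·v ∈ F_2`,
then `w ∈ F_{n-2}` (and hence `η̂ = i_a × i_w`). -/
theorem splitOut_normal_form (n : ℕ) (hn : 4 ≤ n)
    (η μ : MulAut (FreeGroup (Fin n)))
    (a a' : FreeGroup (Fin n)) (ha : a ∈ F2sub n) (ha' : a' ∈ F2sub n)
    (w v : FreeGroup (Fin n))
    (hwinit : NoInitialSegment (F2sub n) w)
    (hvinit : NoInitialSegment (F2sub n) v)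
    (hηF2 : ∀ x ∈ F2sub n, η x = a * x * a⁻¹)
    (hηFm : ∀ x ∈ Fm2sub n, η x = w * x * w⁻¹)
    (hμF2 : ∀ x ∈ F2sub n, μ x = a' * x * a'⁻¹)
    (hμFm : ∀ x ∈ Fm2sub n, μ x = v * x * v⁻¹)
    (hinv : ∃ c : FreeGroup (Fin n), ∀ x, μ (η x) = c * x * c⁻¹)
    (hkey : μ w * v ∈ F2sub n) :
    w ∈ Fm2sub n :=
  splitOut_normal_form_general n μ a' ha' w v hwinit hvinit hμF2 hμFm hkey
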